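/- arXiv:2107.10142 — 8 statements merged into one kernel-verified Lean document; each statement's English description precedes it below -/
import Mathlib

section
/- For every real α > 1, every positive integer q, and all positive real numbers p_1, …, p_q satisfying ∑_{j=1}^q p_j^{1−α} = q, one has ∑_{j=1}^q (q−j+1)·p_j ≥ (∑_{j=1}^q (q−j+1)^{(α−1)/α})^{α/(α−1)} · q^{1/(1−α)}. -/
/-!
Hölder's inequality with the conjugate exponents `α / (α - 1)` and `α`, applied to the factorisation
`wⱼ^((α-1)/α) = (wⱼ pⱼ)^((α-1)/α) · pⱼ^((1-α)/α)`, bounds `∑ wⱼ^((α-1)/α)` by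
`(∑ wⱼ pⱼ)^((α-1)/α) · (∑ pⱼ^(1-α))^(1/α)`. Raising to the power `α / (α - 1)` and inserting the
energy budget `∑ pⱼ^(1-α) = q` gives the bound, with weights `wⱼ = q - j + 1`.
-/

open Finset

section CostEnergy

variable {ι : Type*} (s : Finset ι) {α : ℝ} {w p : ι → ℝ}

theorem sum_rpow_le_cost_mul_energy (hα : 1 < α) (hw : ∀ i ∈ s, 0 ≤ w i)
    (hp : ∀ i ∈ s, 0 < p i) :
    ∑ i ∈ s, w i ^ ((α - 1) / α) ≤
      (∑ i ∈ s, w i * p i) ^ ((α - 1) / α) * (∑ i ∈ s, p i ^ (1 - α)) ^ (1 / α) := by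
  have hα0 : α ≠ 0 := by positivity
  have hα1 : α - 1 ≠ 0 := sub_ne_zero.2 hα.ne'
  have hconj : (α / (α - 1)).HolderConjugate α :=
    ((Real.holderConjugate_iff_eq_conjExponent hα).2 rfl).symm
  have hexp : (α - 1) / α * (α / (α - 1)) = 1 := by field_simp
  have hwp : ∀ i ∈ s, 0 ≤ w i * p i := fun i hi => mul_nonneg (hw i hi) (hp i hi).le
  have hfactor : ∀ i ∈ s,
      w i ^ ((α - 1) / α) = (w i * p i) ^ ((α - 1) / α) * p i ^ ((1 - α) / α) := by
    intro i hi
    rw [Real.mul_rpow (hw i hi) (hp i hi).le, mul_assoc, ← Real.rpow_add (hp i hi),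
      show (α - 1) / α + (1 - α) / α = 0 by ring, Real.rpow_zero, mul_one]
  have hcost : ∑ i ∈ s, ((w i * p i) ^ ((α - 1) / α)) ^ (α / (α - 1)) = ∑ i ∈ s, w i * p i :=
    sum_congr rfl fun i hi => by rw [← Real.rpow_mul (hwp i hi), hexp, Real.rpow_one]
  have henergy : ∑ i ∈ s, (p i ^ ((1 - α) / α)) ^ α = ∑ i ∈ s, p i ^ (1 - α) :=
    sum_congr rfl fun i hi => by rw [← Real.rpow_mul (hp i hi).le, div_mul_cancel₀ _ hα0]
  calc ∑ i ∈ s, w i ^ ((α - 1) / α)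
      = ∑ i ∈ s, (w i * p i) ^ ((α - 1) / α) * p i ^ ((1 - α) / α) := sum_congr rfl hfactor
    _ ≤ (∑ i ∈ s, ((w i * p i) ^ ((α - 1) / α)) ^ (α / (α - 1))) ^ (1 / (α / (α - 1))) *
          (∑ i ∈ s, (p i ^ ((1 - α) / α)) ^ α) ^ (1 / α) :=
        Real.inner_le_Lp_mul_Lq_of_nonneg s hconj
          (fun i hi => Real.rpow_nonneg (hwp i hi) _) (fun i hi => Real.rpow_nonneg (hp i hi).le _)
    _ = (∑ i ∈ s, w i * p i) ^ ((α - 1) / α) * (∑ i ∈ s, p i ^ (1 - α)) ^ (1 / α) := by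
        rw [hcost, henergy, one_div_div]

theorem sum_rpow_rpow_le_cost_mul_energy (hα : 1 < α) (hw : ∀ i ∈ s, 0 ≤ w i)
    (hp : ∀ i ∈ s, 0 < p i) :
    (∑ i ∈ s, w i ^ ((α - 1) / α)) ^ (α / (α - 1)) ≤
      (∑ i ∈ s, w i * p i) * (∑ i ∈ s, p i ^ (1 - α)) ^ (1 / (α - 1)) := by
  have hα0 : α ≠ 0 := by positivity
  have hα1 : α - 1 ≠ 0 := sub_ne_zero.2 hα.ne'
  have hexp : (α - 1) / α * (α / (α - 1)) = 1 := by field_simp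
  have hexp' : 1 / α * (α / (α - 1)) = 1 / (α - 1) := by field_simp
  have hcost : 0 ≤ ∑ i ∈ s, w i * p i := sum_nonneg fun i hi => mul_nonneg (hw i hi) (hp i hi).le
  have henergy : 0 ≤ ∑ i ∈ s, p i ^ (1 - α) :=
    sum_nonneg fun i hi => (Real.rpow_pos_of_pos (hp i hi) _).le
  calc (∑ i ∈ s, w i ^ ((α - 1) / α)) ^ (α / (α - 1))
      ≤ ((∑ i ∈ s, w i * p i) ^ ((α - 1) / α) * (∑ i ∈ s, p i ^ (1 - α)) ^ (1 / α)) ^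
          (α / (α - 1)) :=
        Real.rpow_le_rpow (sum_nonneg fun i hi => Real.rpow_nonneg (hw i hi) _)
          (sum_rpow_le_cost_mul_energy s hα hw hp) (div_pos (by linarith) (by linarith)).le
    _ = (∑ i ∈ s, w i * p i) * (∑ i ∈ s, p i ^ (1 - α)) ^ (1 / (α - 1)) := by
        rw [Real.mul_rpow (Real.rpow_nonneg hcost _) (Real.rpow_nonneg henergy _),
          ← Real.rpow_mul hcost, ← Real.rpow_mul henergy, hexp, hexp', Real.rpow_one]

end CostEnergy

/-- Lower bound of the auxiliary convex program in the NP-hardness proof of Theorem 1: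
for `α > 1` and positive `p₁, …, p_q` with `∑ pⱼ^(1-α) = q`, the objective
`∑ (q-j+1)·pⱼ` is at least `(∑ (q-j+1)^((α-1)/α))^(α/(α-1)) · q^(1/(1-α))`. -/
theorem convex_program_lower_bound_rigid
    (α : ℝ) (hα : 1 < α) (q : ℕ) (hq : 0 < q) (p : ℕ → ℝ)
    (hp : ∀ j ∈ Icc 1 q, 0 < p j)
    (henergy : ∑ j ∈ Icc 1 q, p j ^ (1 - α) = (q : ℝ)) :
    ∑ j ∈ Icc 1 q, ((q : ℝ) - j + 1) * p j ≥
      (∑ j ∈ Icc 1 q, ((q : ℝ) - j + 1) ^ ((α - 1) / α)) ^ (α / (α - 1)) *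
        (q : ℝ) ^ (1 / (1 - α)) := by
  have hw : ∀ j ∈ Icc 1 q, (0 : ℝ) ≤ q - j + 1 := fun j hj => by
    have : (j : ℝ) ≤ q := Nat.cast_le.2 (mem_Icc.1 hj).2
    linarith
  have hbound := sum_rpow_rpow_le_cost_mul_energy (Icc 1 q) hα hw hp
  rw [henergy] at hbound
  have hqpos : (0 : ℝ) < q := Nat.cast_pos.2 hq
  have hcancel : (q : ℝ) ^ (1 / (α - 1)) * (q : ℝ) ^ (1 / (1 - α)) = 1 := by
    rw [← Real.rpow_add hqpos, show 1 / (α - 1) + 1 / (1 - α) = 0 by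
      rw [← neg_sub α 1, div_neg, add_neg_cancel], Real.rpow_zero]
  calc (∑ j ∈ Icc 1 q, ((q : ℝ) - j + 1) ^ ((α - 1) / α)) ^ (α / (α - 1)) *
        (q : ℝ) ^ (1 / (1 - α))
      ≤ (∑ j ∈ Icc 1 q, ((q : ℝ) - j + 1) * p j) * (q : ℝ) ^ (1 / (α - 1)) *
          (q : ℝ) ^ (1 / (1 - α)) :=
        mul_le_mul_of_nonneg_right hbound (Real.rpow_nonneg hqpos.le _)
    _ = ∑ j ∈ Icc 1 q, ((q : ℝ) - j + 1) * p j := by rw [mul_assoc, hcancel, mul_one]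
end

section
/- Let α > 1 be real, q a positive integer, S = ∑_{k=1}^q (q−k+1)^{(α−1)/α}, and define p*_j = S^{1/(α−1)} / ( q^{1/(α−1)} · (q−j+1)^{1/α} ) for j = 1, …, q. Then ∑_{j=1}^q (p*_j)^{1−α} = q and ∑_{j=1}^q (q−j+1)·p*_j = S^{α/(α−1)} · q^{1/(1−α)}; that is, the point p* is feasible for the convex program and attains the value (∑_{j=1}^q (q−j+1)^{(α−1)/α})^{α/(α−1)} · q^{1/(1−α)}. -/
open Finset Real

/-- Stationarity of the Lagrangian of `min ∑ wⱼ pⱼ` subject to `∑ pⱼ ^ (1 - α) = Q` forces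
`pⱼ ∝ wⱼ ^ (-1/α)`; the constant is fixed by the constraint, with `S = ∑ wⱼ ^ ((α - 1) / α)`. -/
noncomputable def stationaryPoint (α Q S w : ℝ) : ℝ :=
  S ^ (1 / (α - 1)) / (Q ^ (1 / (α - 1)) * w ^ (1 / α))

section stationaryPoint

variable {α Q S w : ℝ}

lemma stationaryPoint_rpow_one_sub (hα₀ : α ≠ 0) (hα₁ : α ≠ 1) (hQ : 0 < Q) (hS : 0 < S)
    (hw : 0 < w) : stationaryPoint α Q S w ^ (1 - α) = Q / S * w ^ ((α - 1) / α) := by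
  have hα₁' : α - 1 ≠ 0 := sub_ne_zero.mpr hα₁
  rw [stationaryPoint, div_rpow (by positivity) (by positivity), mul_rpow (by positivity)
    (by positivity), ← rpow_mul hS.le, ← rpow_mul hQ.le, ← rpow_mul hw.le,
    show 1 / (α - 1) * (1 - α) = -1 by field_simp; ring,
    show 1 / α * (1 - α) = -((α - 1) / α) by field_simp; ring,
    rpow_neg_one, rpow_neg_one, rpow_neg hw.le]
  have : 0 < w ^ ((α - 1) / α) := by positivity
  field_simp

lemma mul_stationaryPoint (hα₀ : α ≠ 0) (hw : 0 < w) :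
    w * stationaryPoint α Q S w = S ^ (1 / (α - 1)) / Q ^ (1 / (α - 1)) * w ^ ((α - 1) / α) := by
  have hw' : w ^ ((α - 1) / α) = w / w ^ (1 / α) := by
    rw [show (α - 1) / α = 1 - 1 / α by field_simp, rpow_sub hw, rpow_one]
  have : 0 < w ^ (1 / α) := by positivity
  rw [stationaryPoint, hw']
  field_simp

end stationaryPoint

section sums

variable {ι : Type*} {s : Finset ι} {w : ι → ℝ} {α Q S : ℝ}

theorem sum_stationaryPoint_rpow_one_sub (hα₀ : α ≠ 0) (hα₁ : α ≠ 1) (hQ : 0 < Q)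
    (hw : ∀ i ∈ s, 0 < w i) (hS : S = ∑ i ∈ s, w i ^ ((α - 1) / α)) (hS₀ : 0 < S) :
    ∑ i ∈ s, stationaryPoint α Q S (w i) ^ (1 - α) = Q := by
  rw [sum_congr rfl fun i hi ↦ stationaryPoint_rpow_one_sub hα₀ hα₁ hQ hS₀ (hw i hi),
    ← mul_sum, ← hS]
  field_simp

theorem sum_mul_stationaryPoint (hα₀ : α ≠ 0) (hα₁ : α ≠ 1) (hQ : 0 < Q)
    (hw : ∀ i ∈ s, 0 < w i) (hS : S = ∑ i ∈ s, w i ^ ((α - 1) / α)) (hS₀ : 0 < S) :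
    ∑ i ∈ s, w i * stationaryPoint α Q S (w i) = S ^ (α / (α - 1)) * Q ^ (1 / (1 - α)) := by
  have hα₁' : α - 1 ≠ 0 := sub_ne_zero.mpr hα₁
  rw [sum_congr rfl fun i hi ↦ mul_stationaryPoint hα₀ (hw i hi), ← mul_sum, ← hS,
    show α / (α - 1) = 1 / (α - 1) + 1 by field_simp; ring, rpow_add hS₀, rpow_one,
    show 1 / (1 - α) = -(1 / (α - 1)) by field_simp; ring, rpow_neg hQ.le]
  ring

end sums

/-- The explicit durations `p*_j = S^(1/(α-1)) / (q^(1/(α-1)) · (q-j+1)^(1/α))`, where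
`S = ∑ (q-k+1)^((α-1)/α)`, are feasible for the convex program (their energy is exactly `q`)
and attain the objective value `S^(α/(α-1)) · q^(1/(1-α))`. -/
theorem convex_program_optimal_point_rigid
    (α : ℝ) (hα : 1 < α) (q : ℕ) (hq : 0 < q)
    (S : ℝ) (hS : S = ∑ k ∈ Icc 1 q, ((q : ℝ) - k + 1) ^ ((α - 1) / α))
    (p : ℕ → ℝ)
    (hp : ∀ j ∈ Icc 1 q,
      p j = S ^ (1 / (α - 1)) / ((q : ℝ) ^ (1 / (α - 1)) * ((q : ℝ) - j + 1) ^ (1 / α))) :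
    (∑ j ∈ Icc 1 q, p j ^ (1 - α) = (q : ℝ)) ∧
      ∑ j ∈ Icc 1 q, ((q : ℝ) - j + 1) * p j = S ^ (α / (α - 1)) * (q : ℝ) ^ (1 / (1 - α)) := by
  have hα₀ : α ≠ 0 := by positivity
  have hα₁ : α ≠ 1 := hα.ne'
  have hq' : (0 : ℝ) < q := by exact_mod_cast hq
  have hw : ∀ j ∈ Icc 1 q, (0 : ℝ) < q - j + 1 := fun j hj ↦ by
    have : (j : ℝ) ≤ q := by exact_mod_cast (mem_Icc.mp hj).2
    linarith
  have hS₀ : 0 < S := hS ▸ sum_pos (fun j hj ↦ rpow_pos_of_pos (hw j hj) _)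
    ⟨1, mem_Icc.mpr ⟨le_rfl, hq⟩⟩
  have hp' : ∀ j ∈ Icc 1 q, p j = stationaryPoint α q S (q - j + 1) := hp
  exact ⟨(sum_congr rfl fun j hj ↦ by rw [hp' j hj]).trans
      (sum_stationaryPoint_rpow_one_sub hα₀ hα₁ hq' hw hS hS₀),
    (sum_congr rfl fun j hj ↦ by rw [hp' j hj]).trans
      (sum_mul_stationaryPoint hα₀ hα₁ hq' hw hS hS₀)⟩
end

section
/- Let α > 1 be real and q a positive integer. If positive reals p_1, …, p_q satisfy ∑_{j=1}^q p_j^{1−α} = q and ∑_{j=1}^q (q−j+1)·p_j = (∑_{j=1}^q (q−j+1)^{(α−1)/α})^{α/(α−1)} · q^{1/(1−α)} (the minimum value), then p_j = (∑_{k=1}^q (q−k+1)^{(α−1)/α})^{1/(α−1)} / ( q^{1/(α−1)} · (q−j+1)^{1/α} ) for every j; i.e., the minimizer of the convex program is unique. -/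
/-!
With `a = (α - 1) / α` and `b = 1 / α`, normalise `xⱼ = wⱼ pⱼ / A` (with `A = ∑ wⱼ pⱼ`) and
`yⱼ = pⱼ ^ (1 - α) / E`. Both are probability vectors, and the powers of `pⱼ` cancel in
`xⱼ ^ a * yⱼ ^ b = wⱼ ^ a / (A ^ a * E ^ b)`. When `A` is the claimed minimum,
`A ^ a * E ^ b = ∑ wⱼ ^ a`, so these weighted geometric means sum to `1 = ∑ (a xⱼ + b yⱼ)`.
Weighted AM-GM then holds with equality termwise, forcing `xⱼ = yⱼ`, which pins down `pⱼ`.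
-/

open Finset Real

theorem eq_of_sum_rpow_mul_rpow_eq_one {ι : Type*} {s : Finset ι} {a b : ℝ} {x y : ι → ℝ}
    (ha : 0 < a) (hb : 0 < b) (hab : a + b = 1) (hx : ∀ i ∈ s, 0 ≤ x i) (hy : ∀ i ∈ s, 0 ≤ y i)
    (hxs : ∑ i ∈ s, x i = 1) (hys : ∑ i ∈ s, y i = 1)
    (hxy : ∑ i ∈ s, x i ^ a * y i ^ b = 1) : ∀ i ∈ s, x i = y i := by
  have hgap : ∀ i ∈ s, 0 ≤ a * x i + b * y i - x i ^ a * y i ^ b := fun i hi =>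
    sub_nonneg.2 (geom_mean_le_arith_mean2_weighted ha.le hb.le (hx i hi) (hy i hi) hab)
  have hsum : ∑ i ∈ s, (a * x i + b * y i - x i ^ a * y i ^ b) = 0 := by
    rw [sum_sub_distrib, sum_add_distrib, ← mul_sum, ← mul_sum, hxs, hys, hxy]
    linarith
  intro i hi
  have hi0 := (sum_eq_zero_iff_of_nonneg hgap).1 hsum i hi
  exact (geom_mean_eq_arith_mean2_weighted_iff_of_pos ha hb (hx i hi) (hy i hi) hab).1
    (by linarith)

theorem mul_rpow_mul_rpow_one_sub_rpow {α w p : ℝ} (hα : α ≠ 0) (hw : 0 ≤ w) (hp : 0 < p) :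
    (w * p) ^ ((α - 1) / α) * (p ^ (1 - α)) ^ (1 / α) = w ^ ((α - 1) / α) := by
  rw [mul_rpow hw hp.le, ← rpow_mul hp.le, mul_assoc, ← rpow_add hp]
  have : (α - 1) / α + (1 - α) * (1 / α) = 0 := by field_simp; ring
  rw [this, rpow_zero, mul_one]

theorem eq_rpow_of_mul_div_eq_rpow_div {α w p A E : ℝ} (hα : α ≠ 0) (hw : 0 < w) (hp : 0 < p)
    (hA : 0 < A) (hE : 0 < E) (h : w * p / A = p ^ (1 - α) / E) :
    p = (A / (E * w)) ^ (1 / α) := by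
  have hpα : p ^ α = A / (E * w) := by
    rw [rpow_sub hp, rpow_one] at h
    have : 0 < p ^ α := rpow_pos_of_pos hp α
    field_simp at h ⊢
    linarith
  rw [← hpα, ← rpow_mul hp.le, mul_one_div_cancel hα, rpow_one]

section OptimalValue

variable {α S E : ℝ}

theorem optimal_value_rpow_mul_rpow (hα : 1 < α) (hS : 0 < S) (hE : 0 < E) :
    (S ^ (α / (α - 1)) * E ^ (1 / (1 - α))) ^ ((α - 1) / α) * E ^ (1 / α) = S := by
  rw [mul_rpow (rpow_pos_of_pos hS _).le (rpow_pos_of_pos hE _).le, ← rpow_mul hS.le,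
    ← rpow_mul hE.le, mul_assoc, ← rpow_add hE]
  have hS_exp : α / (α - 1) * ((α - 1) / α) = 1 := by
    field_simp [(by linarith : 0 < α - 1).ne']
  have hE_exp : 1 / (1 - α) * ((α - 1) / α) + 1 / α = 0 := by
    field_simp [(by linarith : 1 - α < 0).ne]
    ring
  rw [hS_exp, hE_exp, rpow_one, rpow_zero, mul_one]

theorem optimal_value_div_rpow {w : ℝ} (hα : 1 < α) (hS : 0 < S) (hE : 0 < E) (hw : 0 < w) :
    (S ^ (α / (α - 1)) * E ^ (1 / (1 - α)) / (E * w)) ^ (1 / α) =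
      S ^ (1 / (α - 1)) / (E ^ (1 / (α - 1)) * w ^ (1 / α)) := by
  have hE_exp : E ^ (1 / (1 - α) * (1 / α)) * E ^ (1 / (α - 1)) = E ^ (1 / α) := by
    rw [← rpow_add hE]
    congr 1
    field_simp [(by linarith : 1 - α < 0).ne, (by linarith : 0 < α - 1).ne']
    ring
  have hS_exp : α / (α - 1) * (1 / α) = 1 / (α - 1) := by
    field_simp [(by linarith : 0 < α - 1).ne']
  rw [div_rpow (mul_pos (rpow_pos_of_pos hS _) (rpow_pos_of_pos hE _)).le (mul_pos hE hw).le,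
    mul_rpow hE.le hw.le, mul_rpow (rpow_pos_of_pos hS _).le (rpow_pos_of_pos hE _).le,
    ← rpow_mul hS.le, ← rpow_mul hE.le, ← hE_exp, hS_exp]
  field_simp

end OptimalValue

theorem eq_of_sum_rpow_eq_of_sum_mul_eq {ι : Type*} {s : Finset ι} {α E : ℝ} {w p : ι → ℝ}
    (hα : 1 < α) (hw : ∀ i ∈ s, 0 < w i) (hp : ∀ i ∈ s, 0 < p i)
    (henergy : ∑ i ∈ s, p i ^ (1 - α) = E)
    (hvalue : ∑ i ∈ s, w i * p i =
      (∑ i ∈ s, w i ^ ((α - 1) / α)) ^ (α / (α - 1)) * E ^ (1 / (1 - α))) :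
    ∀ i ∈ s, p i = (∑ k ∈ s, w k ^ ((α - 1) / α)) ^ (1 / (α - 1)) /
      (E ^ (1 / (α - 1)) * w i ^ (1 / α)) := by
  intro i hi
  have hα0 : 0 < α := by linarith
  set S := ∑ k ∈ s, w k ^ ((α - 1) / α)
  set A := ∑ k ∈ s, w k * p k
  have hS : 0 < S := sum_pos (fun k hk => rpow_pos_of_pos (hw k hk) _) ⟨i, hi⟩
  have hE : 0 < E := henergy ▸ sum_pos (fun k hk => rpow_pos_of_pos (hp k hk) _) ⟨i, hi⟩
  have hA : 0 < A := hvalue ▸ by positivity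
  have hAE : A ^ ((α - 1) / α) * E ^ (1 / α) = S := hvalue ▸ optimal_value_rpow_mul_rpow hα hS hE
  have hxy : ∀ k ∈ s, w k * p k / A = p k ^ (1 - α) / E := by
    refine eq_of_sum_rpow_mul_rpow_eq_one (a := (α - 1) / α) (b := 1 / α) (by positivity)
      (by positivity) (by field_simp; ring)
      (fun k hk => (div_pos (mul_pos (hw k hk) (hp k hk)) hA).le)
      (fun k hk => (div_pos (rpow_pos_of_pos (hp k hk) _) hE).le)
      (by rw [← sum_div, div_self hA.ne']) (by rw [← sum_div, henergy, div_self hE.ne']) ?_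
    calc ∑ k ∈ s, (w k * p k / A) ^ ((α - 1) / α) * (p k ^ (1 - α) / E) ^ (1 / α)
        = ∑ k ∈ s, w k ^ ((α - 1) / α) / S := sum_congr rfl fun k hk => by
          rw [div_rpow (mul_pos (hw k hk) (hp k hk)).le hA.le,
            div_rpow (rpow_pos_of_pos (hp k hk) _).le hE.le, div_mul_div_comm,
            mul_rpow_mul_rpow_one_sub_rpow hα0.ne' (hw k hk).le (hp k hk), hAE]
      _ = 1 := by rw [← sum_div, div_self hS.ne']
  rw [eq_rpow_of_mul_div_eq_rpow_div hα0.ne' (hw i hi) (hp i hi) hA hE (hxy i hi), hvalue]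
  exact optimal_value_div_rpow hα hS hE (hw i hi)

theorem convex_program_unique_minimizer_general
    (α : ℝ) (hα : 1 < α) (q : ℕ) (p : ℕ → ℝ)
    (hp : ∀ j ∈ Icc 1 q, 0 < p j)
    (henergy : ∑ j ∈ Icc 1 q, p j ^ (1 - α) = (q : ℝ))
    (hvalue : ∑ j ∈ Icc 1 q, ((q : ℝ) - j + 1) * p j =
      (∑ j ∈ Icc 1 q, ((q : ℝ) - j + 1) ^ ((α - 1) / α)) ^ (α / (α - 1)) *
        (q : ℝ) ^ (1 / (1 - α))) :
    ∀ j ∈ Icc 1 q,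
      p j = (∑ k ∈ Icc 1 q, ((q : ℝ) - k + 1) ^ ((α - 1) / α)) ^ (1 / (α - 1)) /
        ((q : ℝ) ^ (1 / (α - 1)) * ((q : ℝ) - j + 1) ^ (1 / α)) := by
  have hw : ∀ j ∈ Icc 1 q, 0 < (q : ℝ) - j + 1 := fun j hj => by
    have hjq : (j : ℝ) ≤ q := by exact_mod_cast (mem_Icc.1 hj).2
    linarith
  exact eq_of_sum_rpow_eq_of_sum_mul_eq hα hw hp henergy hvalue

/-- Uniqueness of the minimizer of the convex program: if positive `p₁, …, p_q` satisfy the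
energy constraint with equality and attain the minimum objective value, then they coincide
with the explicit optimal durations. -/
theorem convex_program_unique_minimizer
    (α : ℝ) (hα : 1 < α) (q : ℕ) (hq : 0 < q) (p : ℕ → ℝ)
    (hp : ∀ j ∈ Icc 1 q, 0 < p j)
    (henergy : ∑ j ∈ Icc 1 q, p j ^ (1 - α) = (q : ℝ))
    (hvalue : ∑ j ∈ Icc 1 q, ((q : ℝ) - j + 1) * p j =
      (∑ j ∈ Icc 1 q, ((q : ℝ) - j + 1) ^ ((α - 1) / α)) ^ (α / (α - 1)) *
        (q : ℝ) ^ (1 / (1 - α))) :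
    ∀ j ∈ Icc 1 q,
      p j = (∑ k ∈ Icc 1 q, ((q : ℝ) - k + 1) ^ ((α - 1) / α)) ^ (1 / (α - 1)) /
        ((q : ℝ) ^ (1 / (α - 1)) * ((q : ℝ) - j + 1) ^ (1 / α)) :=
  convex_program_unique_minimizer_general α hα q p hp henergy hvalue
end

section
/- Let α > 1 and E > 0 be reals, m and n positive integers, and for j = 1, …, n let W_j > 0 be reals and size_j positive integers. For all positive reals p_1, …, p_n satisfying the energy constraint ∑_{j=1}^n W_j^α · p_j^{1−α} · size_j ≤ E, one has (1/m)·∑_{j=1}^n ∑_{i=1}^{j} size_i·p_i + (1/2)·∑_{j=1}^n p_j − (1/(2m))·∑_{j=1}^n size_j·p_j ≥ (E^{1/(1−α)}/m) · ( ∑_{i=1}^n W_i · size_i^{1/α} · ( size_i·(n−i+0.5) + 0.5·m )^{(α−1)/α} )^{α/(α−1)}. -/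
open Finset Real

/-
Exchanging the order of summation turns the left-hand side into `(1/m) ∑ᵢ cᵢ pᵢ` with
`cᵢ = sizeᵢ (n - i + 1/2) + m/2`. Writing `Wᵢ sizeᵢ^{1/α} cᵢ^{(α-1)/α}` as the product of
`Wᵢ sizeᵢ^{1/α} pᵢ^{(1-α)/α}` and `(cᵢ pᵢ)^{(α-1)/α}`, Hölder's inequality with exponents `α` and
`α/(α-1)` bounds the sum on the right by `energy^{1/α} (∑ᵢ cᵢ pᵢ)^{(α-1)/α}`, and the energy is at
most `E`; raising to the power `α/(α-1)` gives the claim.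
-/

theorem sum_Icc_sum_Icc_eq_sum_mul {R : Type*} [CommRing R] (n : ℕ) (f : ℕ → R) :
    ∑ j ∈ Icc 1 n, ∑ i ∈ Icc 1 j, f i = ∑ i ∈ Icc 1 n, ((n : R) + 1 - i) * f i := by
  rw [sum_comm' (s' := fun i => Icc i n) (t' := Icc 1 n)
    (by intro x y; simp only [mem_Icc]; omega)]
  refine sum_congr rfl fun i hi => ?_
  rw [sum_const, Nat.card_Icc, nsmul_eq_mul, Nat.cast_sub (by grind), Nat.cast_add, Nat.cast_one]

theorem prefix_sum_bound_eq_weighted_sum_div {m : ℝ} (hm : m ≠ 0) (n : ℕ) (s p : ℕ → ℝ) :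
    (1 / m) * ∑ j ∈ Icc 1 n, ∑ i ∈ Icc 1 j, s i * p i + (1 / 2) * ∑ j ∈ Icc 1 n, p j
        - (1 / (2 * m)) * ∑ j ∈ Icc 1 n, s j * p j =
      (∑ i ∈ Icc 1 n, (s i * ((n : ℝ) - i + 0.5) + 0.5 * m) * p i) / m := by
  rw [sum_Icc_sum_Icc_eq_sum_mul, mul_sum, mul_sum, mul_sum, sum_div, ← sum_add_distrib,
    ← sum_sub_distrib]
  refine sum_congr rfl fun i _ => ?_
  field_simp
  ring

theorem sum_mul_rpow_le_energy_mul_load {ι : Type*} (s : Finset ι) {α : ℝ} (hα : 1 < α)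
    {a b p : ι → ℝ} (ha : ∀ i ∈ s, 0 ≤ a i) (hb : ∀ i ∈ s, 0 ≤ b i) (hp : ∀ i ∈ s, 0 < p i) :
    ∑ i ∈ s, a i * b i ^ ((α - 1) / α) ≤
      (∑ i ∈ s, a i ^ α * p i ^ (1 - α)) ^ (1 / α) * (∑ i ∈ s, b i * p i) ^ ((α - 1) / α) := by
  have hα0 : α ≠ 0 := by positivity
  have hα1 : α - 1 ≠ 0 := by linarith
  have holder := inner_le_Lp_mul_Lq_of_nonneg s (HolderConjugate.conjExponent hα)
    (f := fun i => a i * p i ^ ((1 - α) / α)) (g := fun i => (b i * p i) ^ ((α - 1) / α))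
    (fun i hi => mul_nonneg (ha i hi) (rpow_nonneg (hp i hi).le _))
    (fun i hi => rpow_nonneg (mul_nonneg (hb i hi) (hp i hi).le) _)
  have hprod : ∀ i ∈ s, a i * p i ^ ((1 - α) / α) * (b i * p i) ^ ((α - 1) / α) =
      a i * b i ^ ((α - 1) / α) := by
    intro i hi
    rw [mul_rpow (hb i hi) (hp i hi).le, mul_mul_mul_comm, ← rpow_add (hp i hi),
      show (1 - α) / α + (α - 1) / α = 0 by ring, rpow_zero, mul_one]
  have henergy : ∀ i ∈ s, (a i * p i ^ ((1 - α) / α)) ^ α = a i ^ α * p i ^ (1 - α) := by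
    intro i hi
    rw [mul_rpow (ha i hi) (rpow_nonneg (hp i hi).le _), ← rpow_mul (hp i hi).le,
      div_mul_cancel₀ _ hα0]
  have hload : ∀ i ∈ s, ((b i * p i) ^ ((α - 1) / α)) ^ (α / (α - 1)) = b i * p i := by
    intro i hi
    rw [← rpow_mul (mul_nonneg (hb i hi) (hp i hi).le),
      show (α - 1) / α * (α / (α - 1)) = 1 by field_simp, rpow_one]
  rw [conjExponent] at holder
  rwa [sum_congr rfl hprod, sum_congr rfl henergy, sum_congr rfl hload, one_div_div] at holder

theorem rpow_mul_le_of_le_rpow_mul_rpow {α E S T : ℝ} (hα : 1 < α) (hE : 0 < E) (hS : 0 ≤ S)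
    (hT : 0 ≤ T) (h : S ≤ E ^ (1 / α) * T ^ ((α - 1) / α)) :
    E ^ (1 / (1 - α)) * S ^ (α / (α - 1)) ≤ T := by
  have hα1 : 0 < α - 1 := by linarith
  have hpow : S ^ (α / (α - 1)) ≤ E ^ (1 / (α - 1)) * T :=
    calc S ^ (α / (α - 1)) ≤ (E ^ (1 / α) * T ^ ((α - 1) / α)) ^ (α / (α - 1)) := by gcongr
      _ = E ^ (1 / (α - 1)) * T := by
        rw [mul_rpow (by positivity) (by positivity), ← rpow_mul hE.le, ← rpow_mul hT,
          show 1 / α * (α / (α - 1)) = 1 / (α - 1) by field_simp,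
          show (α - 1) / α * (α / (α - 1)) = 1 by field_simp, rpow_one]
  rwa [show 1 / (1 - α) = -(1 / (α - 1)) by rw [← neg_sub, div_neg], rpow_neg hE.le,
    inv_mul_le_iff₀ (by positivity)]

theorem rigid_lower_bound_LB_general
    (α E : ℝ) (hα : 1 < α) (hE : 0 < E) (m n : ℕ) (hm : 0 < m)
    (W : ℕ → ℝ) (size : ℕ → ℕ)
    (hW : ∀ j ∈ Icc 1 n, 0 < W j)
    (p : ℕ → ℝ) (hp : ∀ j ∈ Icc 1 n, 0 < p j)
    (henergy : ∑ j ∈ Icc 1 n, W j ^ α * p j ^ (1 - α) * (size j : ℝ) ≤ E) :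
    (1 / (m : ℝ)) * ∑ j ∈ Icc 1 n, ∑ i ∈ Icc 1 j, (size i : ℝ) * p i
        + (1 / 2) * ∑ j ∈ Icc 1 n, p j
        - (1 / (2 * (m : ℝ))) * ∑ j ∈ Icc 1 n, (size j : ℝ) * p j ≥
      (E ^ (1 / (1 - α)) / (m : ℝ)) *
        (∑ i ∈ Icc 1 n, W i * (size i : ℝ) ^ (1 / α) *
          ((size i : ℝ) * ((n : ℝ) - i + 0.5) + 0.5 * (m : ℝ)) ^ ((α - 1) / α))
          ^ (α / (α - 1)) := by
  have hm' : (0 : ℝ) < m := Nat.cast_pos.mpr hm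
  set c : ℕ → ℝ := fun i => (size i : ℝ) * ((n : ℝ) - i + 0.5) + 0.5 * (m : ℝ)
  have hc : ∀ i ∈ Icc 1 n, 0 ≤ c i := fun i hi => by
    have : (i : ℝ) ≤ n := by exact_mod_cast (mem_Icc.1 hi).2
    positivity
  have ha : ∀ i ∈ Icc 1 n, 0 ≤ W i * (size i : ℝ) ^ (1 / α) := fun i hi =>
    mul_nonneg (hW i hi).le (rpow_nonneg (Nat.cast_nonneg _) _)
  have henergy' : ∀ i ∈ Icc 1 n, (W i * (size i : ℝ) ^ (1 / α)) ^ α * p i ^ (1 - α) =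
      W i ^ α * p i ^ (1 - α) * (size i : ℝ) := fun i hi => by
    rw [mul_rpow (hW i hi).le (by positivity), one_div,
      rpow_inv_rpow (Nat.cast_nonneg _) (by positivity)]
    ring
  have hload : 0 ≤ ∑ i ∈ Icc 1 n, c i * p i :=
    sum_nonneg fun i hi => mul_nonneg (hc i hi) (hp i hi).le
  rw [ge_iff_le, prefix_sum_bound_eq_weighted_sum_div hm'.ne', div_mul_eq_mul_div,
    div_le_div_iff_of_pos_right hm']
  refine rpow_mul_le_of_le_rpow_mul_rpow hα hE
    (sum_nonneg fun i hi => mul_nonneg (ha i hi) (rpow_nonneg (hc i hi) _)) hload ?_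
  calc _ ≤ _ := sum_mul_rpow_le_energy_mul_load _ hα ha hc hp
    _ ≤ E ^ (1 / α) * (∑ i ∈ Icc 1 n, c i * p i) ^ ((α - 1) / α) := by
      rw [sum_congr rfl henergy']
      gcongr
      exact sum_nonneg fun i hi => mul_nonneg (mul_nonneg (rpow_nonneg (hW i hi).le _)
        (rpow_nonneg (hp i hi).le _)) (Nat.cast_nonneg _)

/-- Lower bound `LB(π)` for rigid jobs: any positive durations satisfying the energy budget
make the total-completion-time lower-bound expression (4) at least the closed form (7). -/
theorem rigid_lower_bound_LB
    (α E : ℝ) (hα : 1 < α) (hE : 0 < E) (m n : ℕ) (hm : 0 < m) (hn : 0 < n)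
    (W : ℕ → ℝ) (size : ℕ → ℕ)
    (hW : ∀ j ∈ Icc 1 n, 0 < W j) (hsize : ∀ j ∈ Icc 1 n, 0 < size j)
    (p : ℕ → ℝ) (hp : ∀ j ∈ Icc 1 n, 0 < p j)
    (henergy : ∑ j ∈ Icc 1 n, W j ^ α * p j ^ (1 - α) * (size j : ℝ) ≤ E) :
    (1 / (m : ℝ)) * ∑ j ∈ Icc 1 n, ∑ i ∈ Icc 1 j, (size i : ℝ) * p i
        + (1 / 2) * ∑ j ∈ Icc 1 n, p j
        - (1 / (2 * (m : ℝ))) * ∑ j ∈ Icc 1 n, (size j : ℝ) * p j ≥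
      (E ^ (1 / (1 - α)) / (m : ℝ)) *
        (∑ i ∈ Icc 1 n, W i * (size i : ℝ) ^ (1 / α) *
          ((size i : ℝ) * ((n : ℝ) - i + 0.5) + 0.5 * (m : ℝ)) ^ ((α - 1) / α))
          ^ (α / (α - 1)) :=
  rigid_lower_bound_LB_general α E hα hE m n hm W size hW p hp henergy
end

section
/- Let α > 1 and E > 0 be reals, m and n positive integers, W_j > 0 reals and size_j positive integers for j = 1, …, n. Define T = ∑_{j=1}^n W_j · size_j^{1/α} · ( size_j·(n−j+0.5) + 0.5·m )^{(α−1)/α} and p̄_i = E^{1/(1−α)} · W_i · size_i^{1/α} · ( size_i·(n−i+0.5) + 0.5·m )^{−1/α} · T^{1/(α−1)} for i = 1, …, n. Then ∑_{j=1}^n W_j^α · p̄_j^{1−α} · size_j = E, and (1/m)·∑_{j=1}^n ∑_{i=1}^{j} size_i·p̄_i + (1/2)·∑_{j=1}^n p̄_j − (1/(2m))·∑_{j=1}^n size_j·p̄_j = (E^{1/(1−α)}/m) · T^{α/(α−1)}; that is, these explicit durations are feasible and attain the lower bound LB(π). -/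
/-!
Write `B j = size j * (n - j + 1/2) + m/2` and `g j = W j * size j ^ (1/α) * B j ^ ((α-1)/α)`,
so that `T = ∑ g j` and `p j = c * W j * size j ^ (1/α) * B j ^ (-1/α)` with
`c = E ^ (1/(1-α)) * T ^ (1/(α-1))`. The energy of job `j` is then `c ^ (1-α) * g j = (E/T) * g j`,
which sums to `E`. Exchanging the double sum turns `LB(π)` into `(1/m) * ∑ B j * p j`, and
`B j * p j = c * g j`, so `LB(π) = c * T / m`.
-/

open Finset Real

section Durations

variable {α c W s B : ℝ}

theorem energy_of_duration (hα : α ≠ 0) (hc : 0 ≤ c) (hW : 0 ≤ W) (hs : 0 ≤ s) (hB : 0 ≤ B) :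
    W ^ α * (c * W * s ^ (1 / α) * B ^ (-(1 / α))) ^ (1 - α) * s =
      c ^ (1 - α) * (W * s ^ (1 / α) * B ^ ((α - 1) / α)) := by
  have hW' : W ^ α * W ^ (1 - α) = W := by
    rw [← rpow_add' hW (by norm_num), add_sub_cancel, rpow_one]
  have hsα : 1 / α * (1 - α) + 1 = 1 / α := by field_simp; ring
  have hs' : s ^ (1 / α * (1 - α)) * s = s ^ (1 / α) := by
    rw [← rpow_add_one' hs (by rw [hsα]; exact one_div_ne_zero hα), hsα]
  have hB' : -(1 / α) * (1 - α) = (α - 1) / α := by field_simp; ring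
  rw [mul_rpow (by positivity) (by positivity), mul_rpow (by positivity) (by positivity),
    mul_rpow (by positivity) (by positivity), ← rpow_mul hs, ← rpow_mul hB, hB', ← hs']
  linear_combination (c ^ (1 - α) * s ^ (1 / α * (1 - α)) * s * B ^ ((α - 1) / α)) * hW'

theorem duration_mul_coeff (hα : α ≠ 0) (hB : 0 < B) :
    c * W * s ^ (1 / α) * B ^ (-(1 / α)) * B = c * (W * s ^ (1 / α) * B ^ ((α - 1) / α)) := by
  rw [show (α - 1) / α = -(1 / α) + 1 by field_simp; ring, rpow_add_one hB.ne']
  ring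

end Durations

theorem rpow_one_div_one_sub_mul_rpow {α E T : ℝ} (hα : α ≠ 1) (hE : 0 ≤ E) (hT : 0 ≤ T) :
    (E ^ (1 / (1 - α)) * T ^ (1 / (α - 1))) ^ (1 - α) = E / T := by
  have h1 : 1 - α ≠ 0 := sub_ne_zero.mpr (Ne.symm hα)
  have h2 : α - 1 ≠ 0 := sub_ne_zero.mpr hα
  rw [mul_rpow (by positivity) (by positivity), ← rpow_mul hE, ← rpow_mul hT,
    one_div_mul_cancel h1, show 1 / (α - 1) * (1 - α) = -1 by field_simp; ring, rpow_one,
    rpow_neg_one, div_eq_mul_inv]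

theorem sum_Icc_sum_Icc_eq {R : Type*} [CommRing R] (f : ℕ → R) (n : ℕ) :
    ∑ j ∈ Icc 1 n, ∑ i ∈ Icc 1 j, f i = ∑ i ∈ Icc 1 n, ((n : R) - i + 1) * f i := by
  simp only [← Ico_add_one_right_eq_Icc]
  rw [← sum_Ico_Ico_comm 1 (n + 1) (fun i _ => f i)]
  refine sum_congr rfl fun i hi => ?_
  rw [sum_const, Nat.card_Ico, nsmul_eq_mul, Nat.cast_sub (by grind)]
  push_cast
  ring

/-- `m` times the coefficient of `p j` in the lower bound `LB(π)`. -/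
def lbCoeff (m n k j : ℕ) : ℝ := (k : ℝ) * ((n : ℝ) - j + 0.5) + 0.5 * (m : ℝ)

theorem lbCoeff_pos {m n j : ℕ} (k : ℕ) (hm : 0 < m) (hj : j ≤ n) : 0 < lbCoeff m n k j := by
  have : (j : ℝ) ≤ n := by exact_mod_cast hj
  have : (0 : ℝ) < m := by exact_mod_cast hm
  unfold lbCoeff
  positivity

theorem lowerBound_eq_sum_mul_lbCoeff {m : ℕ} (hm : m ≠ 0) (n : ℕ) (size : ℕ → ℕ) (p : ℕ → ℝ) :
    (1 / (m : ℝ)) * ∑ j ∈ Icc 1 n, ∑ i ∈ Icc 1 j, (size i : ℝ) * p i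
        + (1 / 2) * ∑ j ∈ Icc 1 n, p j
        - (1 / (2 * (m : ℝ))) * ∑ j ∈ Icc 1 n, (size j : ℝ) * p j =
      (1 / (m : ℝ)) * ∑ j ∈ Icc 1 n, p j * lbCoeff m n (size j) j := by
  rw [sum_Icc_sum_Icc_eq, mul_sum, mul_sum, mul_sum, mul_sum, ← sum_add_distrib,
    ← sum_sub_distrib]
  refine sum_congr rfl fun j _ => ?_
  unfold lbCoeff
  field_simp
  ring

/-- The explicit durations computed by the Lagrangian method for rigid jobs are feasible
(the energy constraint holds with equality) and attain the lower bound `LB(π)`. -/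
theorem rigid_optimal_durations
    (α E : ℝ) (hα : 1 < α) (hE : 0 < E) (m n : ℕ) (hm : 0 < m) (hn : 0 < n)
    (W : ℕ → ℝ) (size : ℕ → ℕ)
    (hW : ∀ j ∈ Icc 1 n, 0 < W j) (hsize : ∀ j ∈ Icc 1 n, 0 < size j)
    (T : ℝ)
    (hT : T = ∑ j ∈ Icc 1 n, W j * (size j : ℝ) ^ (1 / α) *
      ((size j : ℝ) * ((n : ℝ) - j + 0.5) + 0.5 * (m : ℝ)) ^ ((α - 1) / α))
    (p : ℕ → ℝ)
    (hp : ∀ i ∈ Icc 1 n,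
      p i = E ^ (1 / (1 - α)) * W i * (size i : ℝ) ^ (1 / α) *
        ((size i : ℝ) * ((n : ℝ) - i + 0.5) + 0.5 * (m : ℝ)) ^ (-(1 / α)) *
          T ^ (1 / (α - 1))) :
    (∑ j ∈ Icc 1 n, W j ^ α * p j ^ (1 - α) * (size j : ℝ) = E) ∧
      (1 / (m : ℝ)) * ∑ j ∈ Icc 1 n, ∑ i ∈ Icc 1 j, (size i : ℝ) * p i
          + (1 / 2) * ∑ j ∈ Icc 1 n, p j
          - (1 / (2 * (m : ℝ))) * ∑ j ∈ Icc 1 n, (size j : ℝ) * p j =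
        (E ^ (1 / (1 - α)) / (m : ℝ)) * T ^ (α / (α - 1)) := by
  have hα0 : α ≠ 0 := by positivity
  replace hT : T = ∑ j ∈ Icc 1 n,
      W j * (size j : ℝ) ^ (1 / α) * lbCoeff m n (size j) j ^ ((α - 1) / α) := hT
  have hB (j) (hj : j ∈ Icc 1 n) := lbCoeff_pos (size j) hm (mem_Icc.mp hj).2
  have hTpos : 0 < T := hT ▸ sum_pos (fun j hj => by
    have := hW j hj; have := hB j hj; have : (0 : ℝ) < size j := mod_cast hsize j hj
    positivity) ⟨1, mem_Icc.mpr ⟨le_rfl, hn⟩⟩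
  set c := E ^ (1 / (1 - α)) * T ^ (1 / (α - 1))
  have hpc : ∀ j ∈ Icc 1 n,
      p j = c * W j * (size j : ℝ) ^ (1 / α) * lbCoeff m n (size j) j ^ (-(1 / α)) := by
    intro j hj; rw [hp j hj]; unfold lbCoeff; ring
  constructor
  · calc ∑ j ∈ Icc 1 n, W j ^ α * p j ^ (1 - α) * (size j : ℝ)
        = ∑ j ∈ Icc 1 n, E / T * (W j * (size j : ℝ) ^ (1 / α) *
            lbCoeff m n (size j) j ^ ((α - 1) / α)) := sum_congr rfl fun j hj => by
          rw [hpc j hj, energy_of_duration hα0 (by positivity) (hW j hj).le (by positivity)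
            (hB j hj).le, rpow_one_div_one_sub_mul_rpow hα.ne' hE.le hTpos.le]
      _ = E := by rw [← mul_sum, ← hT, div_mul_cancel₀ _ hTpos.ne']
  · rw [lowerBound_eq_sum_mul_lbCoeff hm.ne', sum_congr rfl fun j hj => by
      rw [hpc j hj, duration_mul_coeff hα0 (hB j hj)], ← mul_sum, ← hT,
      show α / (α - 1) = 1 / (α - 1) + 1 by field_simp [sub_ne_zero.mpr hα.ne']; ring,
      rpow_add_one hTpos.ne']
    ring
end

section
/- Let α > 1 be real, W > 0 real, m and n positive integers, and s_1 ≤ s_2 ≤ … ≤ s_n positive integers. For every permutation π of {1, …, n}: ∑_{i=1}^n W·s_i·( n−i+0.5 + 0.5·m/s_i )^{(α−1)/α} ≤ ∑_{i=1}^n W·s_{π(i)}·( n−i+0.5 + 0.5·m/s_{π(i)} )^{(α−1)/α}; that is, among all orderings of the sizes, the function G(π) = ∑_{i=1}^n W·size_{π_i}·( n−i+0.5 + 0.5·m/size_{π_i} )^{(α−1)/α} is minimized when the jobs are ordered by non-decreasing number of required processors. -/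
/-!
Write `β = (α - 1) / α ∈ [0, 1)`, `c_i = n - i + 1/2` (decreasing in the position `i`) and
`g_v(c) = v (c + m / (2v))^β`, so that `G(π) = W ∑ᵢ g_{s_{π i}}(c_i)`. Since `x ↦ x^β` is
concave, its increments `(c + u)^β - (c' + u)^β` (for `c' ≤ c`) shrink as `u = m / (2v)` grows,
i.e. as `v` shrinks; multiplied by `v` this says that `g_v(c) - g_v(c')` is monotone in `v`.
Hence the cost matrix `F i k = g_{s_k}(c_i)` is a Monge matrix, and for a Monge matrix the
identity assignment is optimal: repeatedly swapping the largest misplaced index into place never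
increases the cost.
-/

open Finset Equiv

theorem ConcaveOn.map_add_map_le_of_add_eq {f : ℝ → ℝ} {s : Set ℝ} (hf : ConcaveOn ℝ s f)
    {a b c d : ℝ} (ha : a ∈ s) (hd : d ∈ s) (hab : a ≤ b) (hbd : b ≤ d) (h : a + d = b + c) :
    f a + f d ≤ f b + f c := by
  obtain rfl | had := (hab.trans hbd).eq_or_lt
  · rw [le_antisymm hbd hab, show c = a by linarith]
  -- `b` and `c` are the convex combinations of `a` and `d` with swapped weights `1 - t` and `t`.
  set t := (b - a) / (d - a)
  have hda : d - a ≠ 0 := (sub_pos.2 had).ne'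
  have ht0 : 0 ≤ t := div_nonneg (sub_nonneg.2 hab) (sub_pos.2 had).le
  have ht1 : 0 ≤ 1 - t := by
    rw [sub_nonneg, div_le_one (sub_pos.2 had)]
    linarith
  have hb : (1 - t) • a + t • d = b := by
    simp only [smul_eq_mul, t]
    field_simp
    ring
  have hc : t • a + (1 - t) • d = c := by
    simp only [smul_eq_mul, t]
    field_simp
    linear_combination (d - a) * h
  have hfb := hf.2 ha hd ht1 ht0 (by ring)
  have hfc := hf.2 ha hd ht0 ht1 (by ring)
  rw [hb] at hfb
  rw [hc] at hfc
  simp only [smul_eq_mul] at hfb hfc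
  linarith

theorem Real.mul_rpow_increment_le {β b c c' v v' : ℝ} (hβ0 : 0 ≤ β) (hβ1 : β ≤ 1)
    (hb : 0 ≤ b) (hc' : 0 ≤ c') (hcc : c' ≤ c) (hv : 0 < v) (hvv : v ≤ v') :
    v * ((c + b / v) ^ β - (c' + b / v) ^ β) ≤ v' * ((c + b / v') ^ β - (c' + b / v') ^ β) := by
  have hu : 0 ≤ b / v := div_nonneg hb hv.le
  have hu' : 0 ≤ b / v' := div_nonneg hb (hv.trans_le hvv).le
  have huu : b / v' ≤ b / v := div_le_div_of_nonneg_left hb hv hvv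
  have hincr_nonneg : 0 ≤ (c + b / v) ^ β - (c' + b / v) ^ β :=
    sub_nonneg.2 (Real.rpow_le_rpow (by positivity) (by linarith) hβ0)
  have hincr_anti : (c + b / v) ^ β - (c' + b / v) ^ β ≤
      (c + b / v') ^ β - (c' + b / v') ^ β := by
    have := (Real.concaveOn_rpow hβ0 hβ1).map_add_map_le_of_add_eq
      (a := c' + b / v') (b := c' + b / v) (c := c + b / v') (d := c + b / v)
      (Set.mem_Ici.2 (by positivity)) (Set.mem_Ici.2 (by linarith)) (by linarith) (by linarith)
      (by ring)
    linarith
  exact mul_le_mul hvv hincr_anti hincr_nonneg (hv.le.trans hvv)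

section Monge

variable {ι M : Type*} [Fintype ι] [LinearOrder ι] [AddCommMonoid M] [PartialOrder M]
  [IsOrderedAddMonoid M]

def IsMonge (F : ι → ι → M) : Prop :=
  ∀ ⦃i j k l⦄, i ≤ j → k ≤ l → F i k + F j l ≤ F i l + F j k

theorem Fintype.sum_le_sum_of_eq_off_pair {f g : ι → M} {i j : ι} (hij : i ≠ j)
    (hfg : ∀ k, k ≠ i → k ≠ j → f k = g k) (hle : f i + f j ≤ g i + g j) :
    ∑ k, f k ≤ ∑ k, g k := by
  rw [← sum_compl_add_sum {i, j} f, ← sum_compl_add_sum {i, j} g, sum_pair hij, sum_pair hij]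
  refine add_le_add (Finset.sum_congr rfl fun k hk ↦ ?_).le hle
  simp only [mem_compl, mem_insert, mem_singleton, not_or] at hk
  exact hfg k hk.1 hk.2

theorem IsMonge.sum_apply_swap_mul_le {F : ι → ι → M} (hF : IsMonge F) (σ : Perm ι) {a : ι}
    (hσa : σ a ≤ a) (hσa' : σ⁻¹ a ≤ a) :
    ∑ i, F i ((swap a (σ a) * σ) i) ≤ ∑ i, F i (σ i) := by
  obtain hfix | hmoved := eq_or_ne (σ a) a
  · simp [hfix]
  have hne : σ⁻¹ a ≠ a := fun h ↦ hmoved (by simpa using congrArg σ h.symm)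
  refine Fintype.sum_le_sum_of_eq_off_pair hne (fun k hk hka ↦ ?_) ?_
  · rw [Perm.mul_apply, swap_apply_of_ne_of_ne ?_ (σ.injective.ne hka)]
    rwa [Ne, ← Perm.eq_inv_iff_eq]
  · simpa [add_comm] using hF hσa' hσa

theorem IsMonge.sum_apply_self_le_sum_apply_perm {F : ι → ι → M} (hF : IsMonge F)
    (σ : Perm ι) : ∑ i, F i i ≤ ∑ i, F i (σ i) := by
  induction hN : σ.support.card using Nat.strong_induction_on generalizing σ with
  | _ N ih =>
  obtain rfl | hσ := eq_or_ne σ 1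
  · simp
  have hsupp : σ.support.Nonempty := by
    rwa [nonempty_iff_ne_empty, Ne, Perm.support_eq_empty_iff]
  set a := σ.support.max' hsupp
  have haσ : σ a ≠ a := Perm.mem_support.1 (σ.support.max'_mem hsupp)
  have hle : ∀ x, σ x ≠ x → x ≤ a := fun x hx ↦ σ.support.le_max' x (Perm.mem_support.2 hx)
  calc ∑ i, F i i ≤ ∑ i, F i ((swap a (σ a) * σ) i) :=
        ih _ (hN ▸ Perm.card_support_swap_mul haσ) _ rfl
    _ ≤ ∑ i, F i (σ i) := hF.sum_apply_swap_mul_le σ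
        (hle _ fun h ↦ haσ (σ.injective h)) (hle _ fun h ↦ haσ (by simpa using congrArg σ h))

end Monge

theorem rigid_sequence_optimal_general
    (α W : ℝ) (hα : 1 < α) (hW : 0 < W) (m n : ℕ)
    (s : Fin n → ℕ) (hpos : ∀ i, 0 < s i) (hmono : Monotone s)
    (π : Equiv.Perm (Fin n)) :
    ∑ i : Fin n, W * (s i : ℝ) *
        ((n : ℝ) - ((i : ℕ) + 1) + 0.5 + 0.5 * (m : ℝ) / (s i : ℝ)) ^ ((α - 1) / α) ≤
      ∑ i : Fin n, W * (s (π i) : ℝ) *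
        ((n : ℝ) - ((i : ℕ) + 1) + 0.5 + 0.5 * (m : ℝ) / (s (π i) : ℝ)) ^ ((α - 1) / α) := by
  have hβ0 : 0 ≤ (α - 1) / α := div_nonneg (by linarith) (by linarith)
  have hβ1 : (α - 1) / α ≤ 1 := (div_le_one (by linarith)).2 (by linarith)
  refine IsMonge.sum_apply_self_le_sum_apply_perm (F := fun i k : Fin n ↦ W * (s k : ℝ) *
    ((n : ℝ) - ((i : ℕ) + 1) + 0.5 + 0.5 * (m : ℝ) / (s k : ℝ)) ^ ((α - 1) / α))
    (fun i j k l hij hkl ↦ ?_) π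
  have hj : ((j : ℕ) : ℝ) + 1 ≤ n := by exact_mod_cast j.isLt
  have hij' : ((i : ℕ) : ℝ) ≤ (j : ℕ) := by exact_mod_cast hij
  have := Real.mul_rpow_increment_le hβ0 hβ1 (b := 0.5 * (m : ℝ)) (by positivity)
    (c' := (n : ℝ) - ((j : ℕ) + 1) + 0.5) (c := (n : ℝ) - ((i : ℕ) + 1) + 0.5)
    (by linarith) (by linarith) (v := s k) (by exact_mod_cast hpos k)
    (v' := s l) (by exact_mod_cast hmono hkl)
  linear_combination W * this

/-- Among all orderings of the sizes, `G(π)` is minimized when the rigid jobs are ordered by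
non-decreasing number of required processors. -/
theorem rigid_sequence_optimal
    (α W : ℝ) (hα : 1 < α) (hW : 0 < W) (m n : ℕ) (hm : 0 < m) (hn : 0 < n)
    (s : Fin n → ℕ) (hpos : ∀ i, 0 < s i) (hmono : Monotone s)
    (π : Equiv.Perm (Fin n)) :
    ∑ i : Fin n, W * (s i : ℝ) *
        ((n : ℝ) - ((i : ℕ) + 1) + 0.5 + 0.5 * (m : ℝ) / (s i : ℝ)) ^ ((α - 1) / α) ≤
      ∑ i : Fin n, W * (s (π i) : ℝ) *
        ((n : ℝ) - ((i : ℕ) + 1) + 0.5 + 0.5 * (m : ℝ) / (s (π i) : ℝ)) ^ ((α - 1) / α) :=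
  rigid_sequence_optimal_general α W hα hW m n s hpos hmono π
end

section
/- Let α > 1 be real, S = 3^{(α−1)/α} + 2^{(α−1)/α} + 1, and define p*_j = 3^{1/(1−α)} · (4−j)^{−1/α} · S^{1/(α−1)} for j = 1, 2, 3. Then (p*_1)^{1−α} + (p*_2)^{1−α} + (p*_3)^{1−α} = 3 and 3·p*_1 + 2·p*_2 + p*_3 = ( S^α / 3 )^{1/(α−1)}; that is, these durations are feasible and attain the minimum value of the convex program. -/
/-!
With weights `w_j > 0` and budget `V`, the Lagrange condition `w_j ∝ p_j^{-α}` gives the durations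
`p_j = V^{1/(1-α)} w_j^{-1/α} S^{1/(α-1)}` with `S = ∑ w_j^{(α-1)/α}`. Each term then satisfies
`p_j^{1-α} = V w_j^{(α-1)/α} / S` and `w_j p_j = V^{1/(1-α)} S^{1/(α-1)} w_j^{(α-1)/α}`, so summing
over `j` gives the constraint value `V` and the cost `V^{1/(1-α)} S^{α/(α-1)} = (S^α / V)^{1/(α-1)}`.
The theorem is the case `w_j = 4 - j`, `V = 3`.
-/

open Finset Real

noncomputable def optimalDuration (α V S w : ℝ) : ℝ :=
  V ^ (1 / (1 - α)) * w ^ (-(1 / α)) * S ^ (1 / (α - 1))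

section
variable {α V S w : ℝ}

lemma optimalDuration_rpow_one_sub (hα : 1 < α) (hV : 0 ≤ V) (hS : 0 < S) (hw : 0 < w) :
    optimalDuration α V S w ^ (1 - α) = V * w ^ ((α - 1) / α) / S := by
  have hα0 : α ≠ 0 := by positivity
  rw [optimalDuration, mul_rpow (by positivity) (by positivity),
    mul_rpow (by positivity) (by positivity), ← rpow_mul hV, ← rpow_mul hw.le,
    ← rpow_mul hS.le,
    show 1 / (1 - α) * (1 - α) = 1 by field_simp [(by linarith : 1 - α ≠ 0)],
    show -(1 / α) * (1 - α) = (α - 1) / α by field_simp; ring,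
    show 1 / (α - 1) * (1 - α) = -1 by field_simp [(by linarith : α - 1 ≠ 0)]; ring,
    rpow_one, rpow_neg_one]
  ring

lemma mul_optimalDuration (hα : 1 < α) (hw : 0 ≤ w) :
    w * optimalDuration α V S w = V ^ (1 / (1 - α)) * S ^ (1 / (α - 1)) * w ^ ((α - 1) / α) := by
  have hα0 : α ≠ 0 := by positivity
  have hexp : (α - 1) / α = 1 + -(1 / α) := by field_simp; ring
  have hne : (1 : ℝ) + -(1 / α) ≠ 0 := by
    rw [← hexp]; exact div_ne_zero (by linarith) hα0
  rw [optimalDuration, hexp, rpow_add' hw hne, rpow_one]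
  ring

lemma rpow_div_rpow_inv_sub_one (hα : 1 < α) (hV : 0 ≤ V) (hS : 0 ≤ S) :
    (S ^ α / V) ^ (1 / (α - 1)) = V ^ (1 / (1 - α)) * S ^ (1 / (α - 1)) * S := by
  have hα1 : 0 < α - 1 := by linarith
  have hexp : α * (1 / (α - 1)) = 1 / (α - 1) + 1 := by field_simp; ring
  rw [div_rpow (by positivity) hV, ← rpow_mul hS, hexp,
    rpow_add' hS (by rw [← hexp]; positivity),
    rpow_one, div_eq_mul_inv, ← rpow_neg hV,
    show -(1 / (α - 1)) = 1 / (1 - α) by field_simp [(by linarith : 1 - α ≠ 0)]; ring]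
  ring

end

section
variable {ι : Type*} {s : Finset ι} {w : ι → ℝ} {α V : ℝ}

theorem sum_optimalDuration_rpow_one_sub (hα : 1 < α) (hV : 0 ≤ V) (hs : s.Nonempty)
    (hw : ∀ j ∈ s, 0 < w j) :
    ∑ j ∈ s, optimalDuration α V (∑ i ∈ s, w i ^ ((α - 1) / α)) (w j) ^ (1 - α) = V := by
  set S := ∑ i ∈ s, w i ^ ((α - 1) / α)
  have hS : 0 < S := sum_pos (fun i hi => rpow_pos_of_pos (hw i hi) _) hs
  rw [sum_congr rfl fun j hj => optimalDuration_rpow_one_sub hα hV hS (hw j hj),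
    ← sum_div, ← mul_sum, mul_div_cancel_right₀ _ hS.ne']

theorem sum_mul_optimalDuration (hα : 1 < α) (hV : 0 ≤ V) (hw : ∀ j ∈ s, 0 ≤ w j) :
    ∑ j ∈ s, w j * optimalDuration α V (∑ i ∈ s, w i ^ ((α - 1) / α)) (w j) =
      ((∑ i ∈ s, w i ^ ((α - 1) / α)) ^ α / V) ^ (1 / (α - 1)) := by
  rw [sum_congr rfl fun j hj => mul_optimalDuration hα (hw j hj), ← mul_sum,
    rpow_div_rpow_inv_sub_one hα hV (sum_nonneg fun i hi => rpow_nonneg (hw i hi) _)]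

end

/-- The explicit durations `p*_j = 3^(1/(1-α)) · (4-j)^(-1/α) · S^(1/(α-1))` with
`S = 3^((α-1)/α) + 2^((α-1)/α) + 1` are feasible for the convex program and attain its
minimum value `(S^α / 3)^(1/(α-1))`. -/
theorem convex_program_optimal_point_dedicated
    (α : ℝ) (hα : 1 < α) (S : ℝ)
    (hS : S = (3 : ℝ) ^ ((α - 1) / α) + (2 : ℝ) ^ ((α - 1) / α) + 1)
    (p : ℕ → ℝ)
    (hp : ∀ j ∈ Finset.Icc 1 3,
      p j = (3 : ℝ) ^ (1 / (1 - α)) * ((4 : ℝ) - j) ^ (-(1 / α)) * S ^ (1 / (α - 1))) :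
    (p 1 ^ (1 - α) + p 2 ^ (1 - α) + p 3 ^ (1 - α) = 3) ∧
      3 * p 1 + 2 * p 2 + p 3 = (S ^ α / 3) ^ (1 / (α - 1)) := by
  have hIcc : Finset.Icc 1 3 = ({1, 2, 3} : Finset ℕ) := rfl
  have hS' : S = ∑ j ∈ Finset.Icc (1 : ℕ) 3, ((4 : ℝ) - j) ^ ((α - 1) / α) := by
    norm_num [hIcc, hS, add_assoc]
  have hw : ∀ j ∈ Finset.Icc (1 : ℕ) 3, (0 : ℝ) < 4 - j := by
    simp only [hIcc]; norm_num
  have hp' : ∀ j ∈ Finset.Icc (1 : ℕ) 3, optimalDuration α 3 S (4 - j) = p j :=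
    fun j hj => (hp j hj).symm
  have hfeas := sum_optimalDuration_rpow_one_sub hα zero_le_three ⟨1, by decide⟩ hw
  have hcost := sum_mul_optimalDuration hα zero_le_three fun j hj => (hw j hj).le
  rw [← hS', sum_congr rfl fun j hj => congrArg (· ^ (1 - α)) (hp' j hj)] at hfeas
  rw [← hS', sum_congr rfl fun j hj => congrArg _ (hp' j hj)] at hcost
  norm_num [hIcc, ← add_assoc] at hfeas hcost
  exact ⟨hfeas, by rwa [one_div]⟩
end

section
/- Let α > 1 and E > 0 be reals, n a positive integer, and for i = 1, …, n let W_i > 0 be reals and f_i positive integers. For all positive reals p_1, …, p_n satisfying the energy constraint ∑_{i=1}^n f_i · W_i^α · p_i^{1−α} ≤ E, one has ∑_{i=1}^n (n−i+1)·p_i ≥ E^{1/(1−α)} · ( ∑_{j=1}^n W_j · f_j^{1/α} · (n−j+1)^{(α−1)/α} )^{α/(α−1)}. -/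
/-!
Writing `w = W f^{1/α}` and `c_i = n - i + 1`, each term of the right-hand sum factors as
`w c^{(α-1)/α} = (c p)^{(α-1)/α} · (w^α p^{1-α})^{1/α}`, so Hölder's inequality with the conjugate
exponents `α/(α-1)` and `α` bounds it by `(∑ c p)^{(α-1)/α} · (energy)^{1/α}`, independently of
`p`. Bounding the energy by `E` and raising to the power `α/(α-1)` gives the claim.
-/

open Finset Real

theorem sum_mul_rpow_le_rpow_mul_rpow {ι : Type*} (s : Finset ι) {α : ℝ} (hα : 1 < α)
    {w c p : ι → ℝ} (hw : ∀ i ∈ s, 0 ≤ w i) (hc : ∀ i ∈ s, 0 ≤ c i) (hp : ∀ i ∈ s, 0 < p i) :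
    ∑ i ∈ s, w i * c i ^ ((α - 1) / α) ≤
      (∑ i ∈ s, c i * p i) ^ ((α - 1) / α) * (∑ i ∈ s, w i ^ α * p i ^ (1 - α)) ^ (1 / α) := by
  have hα0 : α ≠ 0 := (zero_lt_one.trans hα).ne'
  have hα1 : α - 1 ≠ 0 := by linarith
  have hpq : (α / (α - 1)).HolderConjugate α := (HolderConjugate.conjExponent hα).symm
  have holder := inner_le_Lp_mul_Lq_of_nonneg s hpq
    (f := fun i => (c i * p i) ^ ((α - 1) / α)) (g := fun i => (w i ^ α * p i ^ (1 - α)) ^ (1 / α))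
    (fun i hi => by have := hc i hi; have := hp i hi; positivity)
    (fun i hi => by have := hw i hi; have := hp i hi; positivity)
  rw [one_div_div] at holder
  have hprod : ∀ i ∈ s, w i * c i ^ ((α - 1) / α) =
      (c i * p i) ^ ((α - 1) / α) * (w i ^ α * p i ^ (1 - α)) ^ (1 / α) := fun i hi => by
    have hwi := hw i hi; have hci := hc i hi; have hpi := hp i hi
    rw [mul_rpow hci hpi.le, mul_rpow (by positivity) (by positivity), ← rpow_mul hwi,
      ← rpow_mul hpi.le, mul_one_div_cancel hα0, rpow_one]
    have hcancel : p i ^ ((α - 1) / α) * p i ^ ((1 - α) * (1 / α)) = 1 := by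
      rw [← rpow_add hpi, show (α - 1) / α + (1 - α) * (1 / α) = 0 by ring, rpow_zero]
    linear_combination (-(w i * c i ^ ((α - 1) / α))) * hcancel
  have hleft : ∀ i ∈ s, ((c i * p i) ^ ((α - 1) / α)) ^ (α / (α - 1)) = c i * p i :=
    fun i hi => by
      have := hc i hi; have := hp i hi
      rw [← rpow_mul (by positivity), div_mul_div_cancel₀ hα0, div_self hα1, rpow_one]
  have hright : ∀ i ∈ s, ((w i ^ α * p i ^ (1 - α)) ^ (1 / α)) ^ α = w i ^ α * p i ^ (1 - α) :=
    fun i hi => by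
      have := hw i hi; have := hp i hi
      rw [one_div, rpow_inv_rpow (by positivity) hα0]
  rwa [sum_congr rfl hleft, sum_congr rfl hright, ← sum_congr rfl hprod] at holder

theorem rpow_mul_rpow_le_of_le_rpow_mul_rpow {α E S T : ℝ} (hα : 1 < α) (hE : 0 < E)
    (hS : 0 ≤ S) (hT : 0 ≤ T) (h : S ≤ T ^ ((α - 1) / α) * E ^ (1 / α)) :
    E ^ (1 / (1 - α)) * S ^ (α / (α - 1)) ≤ T := by
  have hα0 : α ≠ 0 := (zero_lt_one.trans hα).ne'
  have hα1 : 0 < α - 1 := by linarith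
  have hpow : S ^ (α / (α - 1)) ≤ T * E ^ (1 / (α - 1)) := calc
    S ^ (α / (α - 1)) ≤ (T ^ ((α - 1) / α) * E ^ (1 / α)) ^ (α / (α - 1)) := by gcongr
    _ = T * E ^ (1 / (α - 1)) := by
      rw [mul_rpow (by positivity) (by positivity), ← rpow_mul hT, ← rpow_mul hE.le,
        div_mul_div_cancel₀ hα0, div_self hα1.ne', rpow_one]
      congr 2
      field_simp
  have hneg : 1 / (1 - α) = -(1 / (α - 1)) := by rw [← neg_sub, div_neg]
  rw [hneg, rpow_neg hE.le, inv_mul_le_iff₀ (by positivity)]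
  linarith

theorem rpow_mul_rpow_le_sum_mul_of_sum_rpow_le {ι : Type*} (s : Finset ι) {α E : ℝ}
    (hα : 1 < α) (hE : 0 < E) {w c p : ι → ℝ} (hw : ∀ i ∈ s, 0 ≤ w i) (hc : ∀ i ∈ s, 0 ≤ c i)
    (hp : ∀ i ∈ s, 0 < p i) (henergy : ∑ i ∈ s, w i ^ α * p i ^ (1 - α) ≤ E) :
    E ^ (1 / (1 - α)) * (∑ i ∈ s, w i * c i ^ ((α - 1) / α)) ^ (α / (α - 1)) ≤
      ∑ i ∈ s, c i * p i := by
  have hT : 0 ≤ ∑ i ∈ s, c i * p i :=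
    sum_nonneg fun i hi => mul_nonneg (hc i hi) (hp i hi).le
  refine rpow_mul_rpow_le_of_le_rpow_mul_rpow hα hE
    (sum_nonneg fun i hi => mul_nonneg (hw i hi) (rpow_nonneg (hc i hi) _)) hT
    ((sum_mul_rpow_le_rpow_mul_rpow s hα hw hc hp).trans ?_)
  have : 0 ≤ ∑ i ∈ s, w i ^ α * p i ^ (1 - α) :=
    sum_nonneg fun i hi => by have := hw i hi; have := hp i hi; positivity
  gcongr

theorem dedicated_subproblem_lower_bound_general
    (α E : ℝ) (hα : 1 < α) (hE : 0 < E) (n : ℕ)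
    (W : ℕ → ℝ) (f : ℕ → ℕ)
    (hW : ∀ i ∈ Icc 1 n, 0 < W i)
    (p : ℕ → ℝ) (hp : ∀ i ∈ Icc 1 n, 0 < p i)
    (henergy : ∑ i ∈ Icc 1 n, (f i : ℝ) * W i ^ α * p i ^ (1 - α) ≤ E) :
    ∑ i ∈ Icc 1 n, ((n : ℝ) - i + 1) * p i ≥
      E ^ (1 / (1 - α)) *
        (∑ j ∈ Icc 1 n, W j * (f j : ℝ) ^ (1 / α) * ((n : ℝ) - j + 1) ^ ((α - 1) / α))
          ^ (α / (α - 1)) := by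
  have hα0 : α ≠ 0 := (zero_lt_one.trans hα).ne'
  have hc : ∀ i ∈ Icc 1 n, (0 : ℝ) ≤ n - i + 1 := fun i hi => by
    have : (i : ℝ) ≤ n := by exact_mod_cast (mem_Icc.1 hi).2
    linarith
  have hw : ∀ i ∈ Icc 1 n, 0 ≤ W i * (f i : ℝ) ^ (1 / α) :=
    fun i hi => mul_nonneg (hW i hi).le (rpow_nonneg (Nat.cast_nonneg _) _)
  have hwα : ∀ i ∈ Icc 1 n, (W i * (f i : ℝ) ^ (1 / α)) ^ α = f i * W i ^ α := fun i hi => by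
    rw [mul_rpow (hW i hi).le (by positivity), one_div, rpow_inv_rpow (Nat.cast_nonneg _) hα0,
      mul_comm]
  refine (rpow_mul_rpow_le_sum_mul_of_sum_rpow_le (Icc 1 n) hα hE hw hc hp ?_).ge
  rwa [sum_congr rfl fun i hi => by rw [hwα i hi]]

/-- Lower bound for the single-processor subproblem of the two-processor dedicated problem:
any positive durations satisfying the energy budget make the total completion time at least
the closed form `∑C_j¹(π)` of Section 5.2. -/
theorem dedicated_subproblem_lower_bound
    (α E : ℝ) (hα : 1 < α) (hE : 0 < E) (n : ℕ) (hn : 0 < n)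
    (W : ℕ → ℝ) (f : ℕ → ℕ)
    (hW : ∀ i ∈ Icc 1 n, 0 < W i) (hf : ∀ i ∈ Icc 1 n, 0 < f i)
    (p : ℕ → ℝ) (hp : ∀ i ∈ Icc 1 n, 0 < p i)
    (henergy : ∑ i ∈ Icc 1 n, (f i : ℝ) * W i ^ α * p i ^ (1 - α) ≤ E) :
    ∑ i ∈ Icc 1 n, ((n : ℝ) - i + 1) * p i ≥
      E ^ (1 / (1 - α)) *
        (∑ j ∈ Icc 1 n, W j * (f j : ℝ) ^ (1 / α) * ((n : ℝ) - j + 1) ^ ((α - 1) / α))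
          ^ (α / (α - 1)) :=
  dedicated_subproblem_lower_bound_general α E hα hE n W f hW p hp henergy
end
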